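/- Let h, h_star, g be vectors in R^d, let U be a random vector with E[U] = g - h and E[||U - (g - h)||^2] <= chi * ||g - h||^2 for some chi >= 0, and set h_plus = h + lambda * U with lambda = 1/(1 + chi). Then E[ ||h_plus - h_star||^2 ] <= (chi/(1 + chi)) * ||h - h_star||^2 + (1/(1 + chi)) * ||g - h_star||^2. -/

import Mathlib

/-!
Write `h⁺ - h⋆ = c + λ (U - (g - h))` with `c = (1 - λ)(h - h⋆) + λ(g - h⋆)` deterministic and
the second term centred, so the cross term integrates to zero and
`E‖h⁺ - h⋆‖² = ‖c‖² + λ² E‖U - (g - h)‖² ≤ ‖c‖² + λ²χ‖g - h‖²`.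
Since `λ²χ = λ(1 - λ)`, the right-hand side is exactly
`(1 - λ)‖h - h⋆‖² + λ‖g - h⋆‖²` by the parallelogram-type identity for convex combinations.
-/

open MeasureTheory

section InnerProductSpace

variable {E : Type*} [NormedAddCommGroup E] [InnerProductSpace ℝ E]

theorem norm_smul_add_smul_sq_add_mul_mul_norm_sub_sq {a b : ℝ} (hab : a + b = 1) (x y : E) :
    ‖a • x + b • y‖ ^ 2 + a * b * ‖x - y‖ ^ 2 = a * ‖x‖ ^ 2 + b * ‖y‖ ^ 2 := by
  rw [norm_add_sq_real, norm_sub_sq_real, norm_smul, norm_smul, real_inner_smul_left,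
    real_inner_smul_right, mul_pow, mul_pow, Real.norm_eq_abs, Real.norm_eq_abs, sq_abs, sq_abs]
  obtain rfl := eq_sub_of_add_eq hab
  ring

variable [CompleteSpace E] {Ω : Type*} [MeasurableSpace Ω] {μ : Measure Ω}
  [IsProbabilityMeasure μ]

theorem integral_norm_add_sq_of_integral_eq_zero (c : E) {V : Ω → E} (hV : Integrable V μ)
    (hV₀ : ∫ a, V a ∂μ = 0) (hV₂ : Integrable (fun a => ‖V a‖ ^ 2) μ) :
    ∫ a, ‖c + V a‖ ^ 2 ∂μ = ‖c‖ ^ 2 + ∫ a, ‖V a‖ ^ 2 ∂μ := by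
  have hcross : Integrable (fun a => 2 * inner ℝ c (V a)) μ := (hV.const_inner c).const_mul 2
  have hsum : Integrable (fun a => ‖c‖ ^ 2 + 2 * inner ℝ c (V a)) μ :=
    (integrable_const _).add hcross
  simp_rw [norm_add_sq_real]
  rw [integral_add hsum hV₂, integral_add (integrable_const _) hcross,
    integral_const_mul, integral_inner hV, hV₀]
  simp

end InnerProductSpace

theorem stmt10_general {d : ℕ} {Ω : Type*} [MeasurableSpace Ω] (μ : Measure Ω)
    [IsProbabilityMeasure μ]
    (h hstar g : EuclideanSpace ℝ (Fin d))
    (U : Ω → EuclideanSpace ℝ (Fin d)) (χ lam : ℝ) (hχ : 0 ≤ χ)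
    (hlam : lam = 1 / (1 + χ))
    (hUint : Integrable U μ)
    (hmean : ∫ a, U a ∂μ = g - h)
    (hUsq : Integrable (fun a => ‖U a - (g - h)‖ ^ 2) μ)
    (hvar : ∫ a, ‖U a - (g - h)‖ ^ 2 ∂μ ≤ χ * ‖g - h‖ ^ 2) :
    ∫ a, ‖h + lam • U a - hstar‖ ^ 2 ∂μ ≤
      (χ / (1 + χ)) * ‖h - hstar‖ ^ 2 + (1 / (1 + χ)) * ‖g - hstar‖ ^ 2 := by
  set c := (1 - lam) • (h - hstar) + lam • (g - hstar)
  have hsplit : ∀ a, h + lam • U a - hstar = c + lam • (U a - (g - h)) := fun a => by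
    simp only [c]
    module
  have hcentredInt : Integrable (fun a => lam • (U a - (g - h))) μ :=
    (hUint.sub (integrable_const (g - h))).smul lam
  have hcentred : ∫ a, lam • (U a - (g - h)) ∂μ = 0 := by
    rw [integral_smul, integral_sub hUint (integrable_const _), hmean, integral_const]
    simp
  have hcentredSq : Integrable (fun a => ‖lam • (U a - (g - h))‖ ^ 2) μ := by
    simpa only [norm_smul, mul_pow] using hUsq.const_mul (‖lam‖ ^ 2)
  have hconvex : ‖c‖ ^ 2 + (1 - lam) * lam * ‖g - h‖ ^ 2
      = (1 - lam) * ‖h - hstar‖ ^ 2 + lam * ‖g - hstar‖ ^ 2 := by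
    rw [norm_sub_rev, ← sub_sub_sub_cancel_right h g hstar]
    exact norm_smul_add_smul_sq_add_mul_mul_norm_sub_sq (sub_add_cancel 1 lam) _ _
  simp_rw [hsplit]
  rw [integral_norm_add_sq_of_integral_eq_zero c hcentredInt hcentred hcentredSq]
  simp_rw [norm_smul, mul_pow]
  rw [integral_const_mul]
  calc ‖c‖ ^ 2 + ‖lam‖ ^ 2 * ∫ a, ‖U a - (g - h)‖ ^ 2 ∂μ
      ≤ ‖c‖ ^ 2 + ‖lam‖ ^ 2 * (χ * ‖g - h‖ ^ 2) := by gcongr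
    _ = _ := by
      have hχ₁ : 1 + χ ≠ 0 := by positivity
      rw [eq_sub_of_add_eq hconvex, Real.norm_eq_abs, sq_abs, hlam]
      field_simp
      ring

theorem stmt10 {d : ℕ} {Ω : Type*} [MeasurableSpace Ω] (μ : Measure Ω)
    [IsProbabilityMeasure μ]
    (h hstar g : EuclideanSpace ℝ (Fin d))
    (U : Ω → EuclideanSpace ℝ (Fin d)) (χ lam : ℝ) (hχ : 0 ≤ χ)
    (hlam : lam = 1 / (1 + χ))
    (hUint : Integrable U μ)
    (hmean : ∫ a, U a ∂μ = g - h)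
    (hUsq : Integrable (fun a => ‖U a - (g - h)‖ ^ 2) μ)
    (hvar : ∫ a, ‖U a - (g - h)‖ ^ 2 ∂μ ≤ χ * ‖g - h‖ ^ 2)
    (hplussq : Integrable (fun a => ‖h + lam • U a - hstar‖ ^ 2) μ) :
    ∫ a, ‖h + lam • U a - hstar‖ ^ 2 ∂μ ≤
      (χ / (1 + χ)) * ‖h - hstar‖ ^ 2 + (1 / (1 + χ)) * ‖g - hstar‖ ^ 2 :=
  stmt10_general μ h hstar g U χ lam hχ hlam hUint hmean hUsq hvar
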